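/- If f: T → X is order-Henstock integrable, then |f| (the pointwise lattice modulus of f) is also order-Henstock integrable. -/

import Mathlib

open MeasureTheory Set Filter

/-- A tagged partition of the set `A`: finitely many pairwise disjoint measurable
sets covering `A`, each with a tag point. -/
structure TaggedPart (T : Type*) [MeasurableSpace T] (A : Set T) where
  k : ℕ
  E : Fin k → Set T
  tag : Fin k → T
  meas : ∀ i, MeasurableSet (E i)
  disj : ∀ i j, i ≠ j → Disjoint (E i) (E j)
  cover : (⋃ i, E i) = A

namespace TaggedPart

variable {T : Type*} [MeasurableSpace T] {A : Set T}

/-- A Henstock partition: each tag belongs to its set. -/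
def IsHenstock (P : TaggedPart T A) : Prop := ∀ i, P.tag i ∈ P.E i

/-- `γ`-fineness: each set is within distance `γ (tag)` of its tag. -/
def IsFine [PseudoMetricSpace T] (γ : T → ℝ) (P : TaggedPart T A) : Prop :=
  ∀ i, ∀ w ∈ P.E i, dist w (P.tag i) < γ (P.tag i)

/-- The Riemann sum `σ(f, P) = ∑ μ(Eᵢ) • f(tᵢ)`. -/
noncomputable def sum {X : Type*} [AddCommMonoid X] [Module ℝ X]
    (P : TaggedPart T A) (f : T → X) (μ : Measure T) : X :=
  ∑ i, (μ (P.E i)).toReal • f (P.tag i)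

end TaggedPart

/-- A gage is a strictly positive function. -/
def IsGage {T : Type*} (γ : T → ℝ) : Prop := ∀ t, 0 < γ t

/-- An (o)-sequence: decreasing with infimum `0`. -/
def IsOSeq {X : Type*} [Lattice X] [AddCommGroup X] (b : ℕ → X) : Prop :=
  Antitone b ∧ IsGLB (Set.range b) 0

section Defs

variable {T : Type*} [MeasurableSpace T] [PseudoMetricSpace T]
  {X : Type*} [NormedAddCommGroup X] [Lattice X] [IsOrderedAddMonoid X] [HasSolidNorm X] [NormedSpace ℝ X]

/-- Order-Henstock integrability of `f` on `A` with integral `J`. -/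
def HasOHIntegralOn (f : T → X) (μ : Measure T) (A : Set T) (J : X) : Prop :=
  ∃ b : ℕ → X, IsOSeq b ∧ ∃ γ : ℕ → T → ℝ, (∀ n, IsGage (γ n)) ∧
    ∀ n (P : TaggedPart T A), P.IsHenstock → P.IsFine (γ n) →
      |P.sum f μ - J| ≤ b n

/-- Order-McShane (free partition) integrability of `f` on `A` with integral `J`. -/
def HasOMIntegralOn (f : T → X) (μ : Measure T) (A : Set T) (J : X) : Prop :=
  ∃ b : ℕ → X, IsOSeq b ∧ ∃ γ : ℕ → T → ℝ, (∀ n, IsGage (γ n)) ∧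
    ∀ n (P : TaggedPart T A), P.IsFine (γ n) → |P.sum f μ - J| ≤ b n

/-- Order-McShane integrability with a prescribed regulating (o)-sequence `b`. -/
def HasOMIntegralOnWith (f : T → X) (μ : Measure T) (A : Set T) (J : X)
    (b : ℕ → X) : Prop :=
  ∃ γ : ℕ → T → ℝ, (∀ n, IsGage (γ n)) ∧
    ∀ n (P : TaggedPart T A), P.IsFine (γ n) → |P.sum f μ - J| ≤ b n

/-- Norm-Henstock integrability of `f` on `A` with integral `J`. -/
def HasNormHIntegralOn (f : T → X) (μ : Measure T) (A : Set T) (J : X) : Prop :=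
  ∀ ε : ℝ, 0 < ε → ∃ γ : T → ℝ, IsGage γ ∧
    ∀ P : TaggedPart T A, P.IsHenstock → P.IsFine γ → ‖P.sum f μ - J‖ ≤ ε

/-- Norm-McShane (free partition) integrability of `f` on `A` with integral `J`. -/
def HasNormMIntegralOn (f : T → X) (μ : Measure T) (A : Set T) (J : X) : Prop :=
  ∀ ε : ℝ, 0 < ε → ∃ γ : T → ℝ, IsGage γ ∧
    ∀ P : TaggedPart T A, P.IsFine γ → ‖P.sum f μ - J‖ ≤ ε

end Defs

/-!
By the Cauchy criterion in the Dedekind complete lattice `X`, it suffices to bound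
`σ(|f|, P) - σ(|f|, Q)` by a multiple of `b n` for any two `γ n`-fine Henstock partitions `P`, `Q`.
On the common refinement of `P` and `Q` this difference is at most `∑ |μ(B) • (f(τ) - f(σ))|`, and
in a lattice-ordered group a sum of moduli is bounded by any bound of all its signed sums. A signed
sum is the difference of the Riemann sums of `f` for two taggings of the refinement that mix the
tags of `P` and `Q`. Merging the cells with equal tags turns such a tagging into a `γ n`-fine
Henstock partition provided each tag used lies in a cell carrying it; this can be arranged
separately on three blocks of cells, so each block contributes at most `2 • b n`.
-/

open Function

section LatticeGroup

variable {X : Type*} [Lattice X] [AddCommGroup X] [IsOrderedAddMonoid X]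

theorem nonneg_of_two_pow_nsmul_nonneg (k : ℕ) {y : X} (h : 0 ≤ 2 ^ k • y) : 0 ≤ y := by
  induction k generalizing y with
  | zero => simpa using h
  | succ k ih => exact nsmul_two_semiclosed (ih (by rwa [smul_smul, ← pow_succ]))

theorem Finset.sum_abs_le_of_forall_subset {ι : Type*} [DecidableEq ι] (x : ι → X) {c : X}
    {W : Finset ι} (h : ∀ S ⊆ W, ∑ p ∈ S, x p - ∑ p ∈ W \ S, x p ≤ c) :
    ∑ p ∈ W, |x p| ≤ c := by
  induction W using Finset.induction_on generalizing c with
  | empty => simpa using h ∅ subset_rfl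
  | insert a W ha ih =>
    have hplus : ∑ p ∈ W, |x p| ≤ c - x a := ih fun S hS => by
      have := h (insert a S) (Finset.insert_subset_insert a hS)
      rw [Finset.insert_sdiff_insert, Finset.sdiff_insert_of_notMem ha,
        Finset.sum_insert fun haS => ha (hS haS)] at this
      rw [le_sub_iff_add_le]
      convert this using 1
      abel
    have hminus : ∑ p ∈ W, |x p| ≤ c - -x a := ih fun S hS => by
      have := h S (hS.trans (Finset.subset_insert a W))
      rw [Finset.insert_sdiff_of_notMem _ fun haS => ha (hS haS),
        Finset.sum_insert fun haW => ha (Finset.mem_sdiff.1 haW).1] at this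
      rw [le_sub_iff_add_le]
      convert this using 1
      abel
    rw [Finset.sum_insert ha, ← le_sub_iff_add_le]
    exact abs_le'.2 ⟨le_sub_comm.1 hplus, le_sub_comm.1 hminus⟩

theorem sum_abs_sub_le_of_forall_interval {ι : Type*} [Fintype ι] [DecidableEq ι] (a c : ι → X)
    {J b : X} {L U : Finset ι} (hLU : L ⊆ U)
    (h : ∀ S, L ⊆ S → S ⊆ U → |∑ p, (if p ∈ S then a p else c p) - J| ≤ b) :
    ∑ p ∈ U \ L, |a p - c p| ≤ 2 • b := by
  have hmix (S : Finset ι) :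
      ∑ p, (if p ∈ S then a p else c p) = ∑ p, c p + ∑ p ∈ S, (a p - c p) := by
    have hsplit : ∀ p, (if p ∈ S then a p else c p) = c p + if p ∈ S then a p - c p else 0 :=
      fun p => by split_ifs <;> abel
    rw [Finset.sum_congr rfl fun p _ => hsplit p, Finset.sum_add_distrib, Finset.sum_ite_mem,
      Finset.univ_inter]
  refine Finset.sum_abs_le_of_forall_subset _ fun S hS => ?_
  have hdisj₁ : Disjoint L S := Finset.disjoint_of_subset_right hS Finset.disjoint_sdiff
  have hdisj₂ : Disjoint L ((U \ L) \ S) :=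
    Finset.disjoint_of_subset_right Finset.sdiff_subset Finset.disjoint_sdiff
  have h₁ := h (L ∪ S) Finset.subset_union_left
    (Finset.union_subset hLU (hS.trans Finset.sdiff_subset))
  have h₂ := h (L ∪ ((U \ L) \ S)) Finset.subset_union_left
    (Finset.union_subset hLU (Finset.sdiff_subset.trans Finset.sdiff_subset))
  rw [hmix, Finset.sum_union hdisj₁] at h₁
  rw [hmix, Finset.sum_union hdisj₂] at h₂
  calc ∑ p ∈ S, (a p - c p) - ∑ p ∈ (U \ L) \ S, (a p - c p)
      = (∑ p, c p + (∑ p ∈ L, (a p - c p) + ∑ p ∈ S, (a p - c p)) - J)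
        - (∑ p, c p + (∑ p ∈ L, (a p - c p) + ∑ p ∈ (U \ L) \ S, (a p - c p)) - J) := by abel
    _ ≤ b + b := (sub_eq_add_neg _ _).trans_le
        (add_le_add ((le_abs_self _).trans h₁) ((neg_le_abs _).trans h₂))
    _ = 2 • b := (two_nsmul b).symm

theorem sum_abs_sub_le_of_forall_comparable {ι : Type*} [Fintype ι] [DecidableEq ι] (a c : ι → X)
    {J b : X} {K₁ K₂ : Finset ι} (hK : K₁ ⊆ K₂)
    (h : ∀ S, (S ⊆ K₁ ∨ K₁ ⊆ S) → (S ⊆ K₂ ∨ K₂ ⊆ S) →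
      |∑ p, (if p ∈ S then a p else c p) - J| ≤ b) :
    ∑ p, |a p - c p| ≤ 6 • b := by
  have h₀ := sum_abs_sub_le_of_forall_interval a c (Finset.empty_subset K₁)
    fun S _ hS => h S (.inl hS) (.inl (hS.trans hK))
  have h₁ := sum_abs_sub_le_of_forall_interval a c hK
    fun S hS hS' => h S (.inr hS) (.inl hS')
  have h₂ := sum_abs_sub_le_of_forall_interval a c (Finset.subset_univ K₂)
    fun S hS _ => h S (.inr (hK.trans hS)) (.inr hS)
  rw [Finset.sdiff_empty] at h₀
  rw [← Finset.sum_sdiff (Finset.subset_univ K₂), ← Finset.sum_sdiff hK]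
  calc _ ≤ 2 • b + (2 • b + 2 • b) := add_le_add h₂ (add_le_add h₁ h₀)
    _ = 6 • b := by rw [← add_nsmul, ← add_nsmul]

theorem IsOSeq.add {b c : ℕ → X} (hb : IsOSeq b) (hc : IsOSeq c) : IsOSeq (b + c) := by
  refine ⟨hb.1.add hc.1, ?_, fun z hz => ?_⟩
  · rintro _ ⟨n, rfl⟩
    exact add_nonneg (hb.2.1 ⟨n, rfl⟩) (hc.2.1 ⟨n, rfl⟩)
  have hzc : ∀ m, z - c m ≤ 0 := fun m => hb.2.2 <| by
    rintro _ ⟨n, rfl⟩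
    have hz' : z ≤ b (max n m) + c (max n m) := hz ⟨max n m, rfl⟩
    exact sub_le_iff_le_add.2 <| hz'.trans
      (add_le_add (hb.1 (le_max_left n m)) (hc.1 (le_max_right n m)))
  exact hc.2.2 <| by
    rintro _ ⟨m, rfl⟩
    exact sub_nonpos.1 (hzc m)

theorem IsOSeq.nsmul {b : ℕ → X} (hb : IsOSeq b) (k : ℕ) : IsOSeq (k • b) := by
  induction k with
  | zero =>
    rw [zero_smul]
    exact ⟨antitone_const, by rw [Pi.zero_def, Set.range_const]; exact isGLB_singleton⟩
  | succ k ih => simpa only [succ_nsmul] using ih.add hb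

theorem exists_forall_abs_sub_le_of_antitone
    (hDC : ∀ s : Set X, s.Nonempty → BddAbove s → ∃ x, IsLUB s x) {S : ℕ → Set X}
    (hS : Antitone S) (hne : ∀ n, (S n).Nonempty) {c : ℕ → X}
    (hc : ∀ n, ∀ x ∈ S n, ∀ y ∈ S n, x ≤ y + c n) :
    ∃ J, ∀ n, ∀ x ∈ S n, |x - J| ≤ c n := by
  set L := {z | ∃ n, ∃ x ∈ S n, z = x - c n}
  have hL : ∀ m, ∀ y ∈ S m, y + c m ∈ upperBounds L := by
    rintro m y hy _ ⟨n, x, hx, rfl⟩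
    obtain ⟨z, hz⟩ := hne (max n m)
    exact sub_le_iff_le_add.2 <| (hc n x hx z (hS (le_max_left n m) hz)).trans <|
      add_le_add (hc m z (hS (le_max_right n m) hz) y hy) le_rfl
  obtain ⟨y₀, hy₀⟩ := hne 0
  obtain ⟨J, hJ⟩ := hDC L ⟨y₀ - c 0, 0, y₀, hy₀, rfl⟩ ⟨_, hL 0 y₀ hy₀⟩
  refine ⟨J, fun n x hx => abs_le'.2 ⟨?_, ?_⟩⟩
  · exact sub_le_comm.1 (hJ.1 ⟨n, x, hx, rfl⟩)
  · rw [neg_sub]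
    exact sub_le_iff_le_add'.2 (hJ.2 (hL n x hx))

end LatticeGroup

section NormedLattice

variable {X : Type*} [NormedAddCommGroup X] [Lattice X] [IsOrderedAddMonoid X] [HasSolidNorm X]
  [NormedSpace ℝ X]

theorem smul_nonneg_of_hasSolidNorm {r : ℝ} (hr : 0 ≤ r) {x : X} (hx : 0 ≤ x) : 0 ≤ r • x := by
  have hdyadic : ∀ k : ℕ, 0 ≤ ((⌊r * 2 ^ k⌋₊ : ℝ) / 2 ^ k) • x := fun k =>
    nonneg_of_two_pow_nsmul_nonneg k <| by
      rw [← Nat.cast_smul_eq_nsmul ℝ, smul_smul, Nat.cast_pow, Nat.cast_ofNat,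
        mul_div_cancel₀ _ (by positivity), Nat.cast_smul_eq_nsmul]
      exact nsmul_nonneg hx _
  have hlim : Tendsto (fun k : ℕ => (⌊r * 2 ^ k⌋₊ : ℝ) / 2 ^ k) atTop (nhds r) :=
    (tendsto_nat_floor_mul_div_atTop hr).comp (tendsto_pow_atTop_atTop_of_one_lt one_lt_two)
  exact ge_of_tendsto' (hlim.smul_const x) hdyadic

instance : PosSMulMono ℝ X := .of_smul_nonneg fun _ hr _ hx => smul_nonneg_of_hasSolidNorm hr hx

theorem abs_smul_of_nonneg {r : ℝ} (hr : 0 ≤ r) (x : X) : |r • x| = r • |x| := by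
  rcases hr.eq_or_lt with rfl | hr
  · simp
  · rw [abs, abs, ← smul_neg]
    exact ((OrderIso.smulRight hr).map_sup x (-x)).symm

end NormedLattice

section MixTags

variable {ι T : Type*} [DecidableEq ι]

def mixTags (S : Finset ι) (τ σ : ι → T) (p : ι) : T := if p ∈ S then τ p else σ p

variable [Fintype ι] {B : ι → Set T} {τ σ : ι → T}

open Classical in
theorem exists_mixTags_eq_mem (hτ : ∀ p, ∃ q, τ q = τ p ∧ τ p ∈ B q)
    (hσ : ∀ p, ∃ q, σ q = σ p ∧ σ p ∈ B q) (hτσ : ∀ p, τ p ∈ B p → σ p ∈ B p → τ p = σ p)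
    {S : Finset ι}
    (h₁ : S ⊆ ({p | τ p ∈ B p} : Finset ι) ∨ ({p | τ p ∈ B p} : Finset ι) ⊆ S)
    (h₂ : S ⊆ ({p | τ p ∈ B p ∨ σ p ∉ B p} : Finset ι) ∨
      ({p | τ p ∈ B p ∨ σ p ∉ B p} : Finset ι) ⊆ S) (p : ι) :
    ∃ q, mixTags S τ σ q = mixTags S τ σ p ∧ mixTags S τ σ p ∈ B q := by
  by_cases hp : p ∈ S
  · simp only [mixTags, if_pos hp]
    obtain ⟨q, hq, hmem⟩ := hτ p
    rcases h₁ with hS | hS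
    · exact ⟨p, if_pos hp, by simpa using hS hp⟩
    · have hqS : q ∈ S := hS (by simpa [hq] using hmem)
      exact ⟨q, by rw [if_pos hqS, hq], hmem⟩
  · simp only [mixTags, if_neg hp]
    obtain ⟨q, hq, hmem⟩ := hσ p
    rcases h₂ with hS | hS
    · refine ⟨q, ?_, hmem⟩
      by_cases hqS : q ∈ S
      · have hσq : σ q ∈ B q := hq ▸ hmem
        have hτq : τ q ∈ B q := by simpa [hσq] using hS hqS
        rw [if_pos hqS, hτσ q hτq hσq, hq]
      · rw [if_neg hqS, hq]
    · have hσp : σ p ∈ B p := by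
        by_contra h
        exact hp (hS (by simp [h]))
      exact ⟨p, if_neg hp, hσp⟩

end MixTags

section FiberSum

variable {T X : Type*} [MeasurableSpace T] [AddCommMonoid X] [Module ℝ X] {μ : Measure T}
  [IsFiniteMeasure μ]

theorem sum_measureReal_biUnion_smul {ι κ : Type*} [Fintype ι] [DecidableEq κ] {B : ι → Set T}
    (hmeas : ∀ p, MeasurableSet (B p)) (hdisj : Pairwise (Disjoint on B)) {π : ι → κ}
    {s : Finset κ} (hs : ∀ p, π p ∈ s) (v : κ → X) :
    ∑ i ∈ s, μ.real (⋃ p ∈ ({p | π p = i} : Finset ι), B p) • v i =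
      ∑ p, μ.real (B p) • v (π p) := by
  calc _ = ∑ i ∈ s, ∑ p ∈ ({p | π p = i} : Finset ι), μ.real (B p) • v (π p) := by
        refine Finset.sum_congr rfl fun i _ => ?_
        rw [measureReal_biUnion_finset (hdisj.set_pairwise _) fun p _ => hmeas p, Finset.sum_smul]
        exact Finset.sum_congr rfl fun p hp => by rw [(Finset.mem_filter.1 hp).2]
    _ = _ := Finset.sum_fiberwise_of_maps_to (fun p _ => hs p) _

end FiberSum

namespace TaggedPart

variable {T : Type*} [MeasurableSpace T] {A : Set T}

theorem IsHenstock.eq_of_tag_mem {P : TaggedPart T A} (hP : P.IsHenstock) {i j : Fin P.k}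
    (h : P.tag i ∈ P.E j) : j = i :=
  by_contra fun hji => Set.disjoint_left.1 (P.disj j i hji) h (hP i)

theorem IsFine.mono [PseudoMetricSpace T] {P : TaggedPart T A} {δ γ : T → ℝ} (hP : P.IsFine δ)
    (h : δ ≤ γ) : P.IsFine γ :=
  fun i w hw => (hP i w hw).trans_le (h _)

noncomputable def ofFinset (s : Finset T) (E : T → Set T) (hmeas : ∀ t ∈ s, MeasurableSet (E t))
    (hdisj : (s : Set T).PairwiseDisjoint E) (hcover : ⋃ t ∈ s, E t = A) : TaggedPart T A where
  k := s.card
  E i := E (s.equivFin.symm i)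
  tag i := s.equivFin.symm i
  meas i := hmeas _ (s.equivFin.symm i).2
  disj i j hij := hdisj (s.equivFin.symm i).2 (s.equivFin.symm j).2
    (Subtype.coe_injective.ne (s.equivFin.symm.injective.ne hij))
  cover := by
    rw [← hcover, ← Finset.set_biUnion_coe, Set.biUnion_eq_iUnion]
    exact s.equivFin.symm.iSup_comp (g := fun t : (s : Set T) => E t)

section OfFinset

variable {s : Finset T} {E : T → Set T} {hmeas : ∀ t ∈ s, MeasurableSet (E t)}
  {hdisj : (s : Set T).PairwiseDisjoint E} {hcover : ⋃ t ∈ s, E t = A}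

theorem isHenstock_ofFinset (h : ∀ t ∈ s, t ∈ E t) :
    (ofFinset s E hmeas hdisj hcover).IsHenstock :=
  fun i => h _ (s.equivFin.symm i).2

theorem isFine_ofFinset [PseudoMetricSpace T] {γ : T → ℝ} (h : ∀ t ∈ s, ∀ w ∈ E t, dist w t < γ t) :
    (ofFinset s E hmeas hdisj hcover).IsFine γ :=
  fun i => h _ (s.equivFin.symm i).2

theorem sum_ofFinset {X : Type*} [AddCommMonoid X] [Module ℝ X] (f : T → X) (μ : Measure T) :
    (ofFinset s E hmeas hdisj hcover).sum f μ = ∑ t ∈ s, μ.real (E t) • f t := by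
  rw [← Finset.sum_coe_sort s]
  exact s.equivFin.symm.sum_comp fun t : s => μ.real (E t) • f t

end OfFinset

open Classical in
noncomputable def merge {ι : Type*} [Fintype ι] (B : ι → Set T) (χ : ι → T)
    (hmeas : ∀ p, MeasurableSet (B p)) (hdisj : Pairwise (Disjoint on B))
    (hcover : ⋃ p, B p = A) : TaggedPart T A :=
  ofFinset (Finset.univ.image χ) (fun t => ⋃ p ∈ ({p | χ p = t} : Finset ι), B p)
    (fun _ _ => Finset.measurableSet_biUnion _ fun p _ => hmeas p)
    (fun t _ t' _ htt' => by
      simp only [Function.onFun, Set.disjoint_iUnion₂_left, Set.disjoint_iUnion₂_right,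
        Finset.mem_filter, Finset.mem_univ, true_and]
      rintro p rfl q rfl
      exact hdisj fun hpq => htt' (congrArg χ hpq))
    (by
      rw [← hcover]
      ext x
      simpa using ⟨fun ⟨_, p, _, hp⟩ => ⟨p, hp⟩, fun ⟨p, hp⟩ => ⟨p, p, rfl, hp⟩⟩)

section Merge

variable {ι : Type*} [Fintype ι] {B : ι → Set T} {χ : ι → T} {hmeas : ∀ p, MeasurableSet (B p)}
  {hdisj : Pairwise (Disjoint on B)} {hcover : ⋃ p, B p = A}

theorem isHenstock_merge (h : ∀ p, ∃ q, χ q = χ p ∧ χ p ∈ B q) :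
    (merge B χ hmeas hdisj hcover).IsHenstock := by
  classical
  refine isHenstock_ofFinset fun t ht => ?_
  obtain ⟨p, -, rfl⟩ := Finset.mem_image.1 ht
  obtain ⟨q, hq, hmem⟩ := h p
  exact Set.mem_biUnion (by simpa using hq) hmem

theorem isFine_merge [PseudoMetricSpace T] {γ : T → ℝ}
    (h : ∀ p, ∀ w ∈ B p, dist w (χ p) < γ (χ p)) : (merge B χ hmeas hdisj hcover).IsFine γ := by
  refine isFine_ofFinset fun t _ w hw => ?_
  obtain ⟨p, hp, hwp⟩ := Set.mem_iUnion₂.1 hw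
  obtain rfl : χ p = t := by simpa using hp
  exact h p w hwp

theorem sum_merge {X : Type*} [AddCommMonoid X] [Module ℝ X] (f : T → X) (μ : Measure T)
    [IsFiniteMeasure μ] :
    (merge B χ hmeas hdisj hcover).sum f μ = ∑ p, μ.real (B p) • f (χ p) := by
  classical
  exact (sum_ofFinset f μ).trans <| sum_measureReal_biUnion_smul hmeas hdisj
    (fun p => Finset.mem_image_of_mem χ (Finset.mem_univ p)) f

end Merge

theorem sum_eq_sum_of_refines {X : Type*} [AddCommMonoid X] [Module ℝ X] (P : TaggedPart T A)
    {ι : Type*} [Fintype ι] {B : ι → Set T} (hmeas : ∀ p, MeasurableSet (B p))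
    (hdisj : Pairwise (Disjoint on B)) (hcover : ⋃ p, B p = A) {π : ι → Fin P.k}
    (hπ : ∀ p, B p ⊆ P.E (π p)) (g : T → X) (μ : Measure T) [IsFiniteMeasure μ] :
    P.sum g μ = ∑ p, μ.real (B p) • g (P.tag (π p)) := by
  have hE : ∀ i, P.E i = ⋃ p ∈ ({p | π p = i} : Finset ι), B p := fun i => by
    refine Subset.antisymm (fun x hx => ?_) (iUnion₂_subset fun p hp => ?_)
    · have hxA : x ∈ ⋃ p, B p := hcover ▸ P.cover ▸ mem_iUnion.2 ⟨i, hx⟩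
      obtain ⟨p, hp⟩ := mem_iUnion.1 hxA
      have hpi : π p = i := by_contra fun h => Set.disjoint_left.1 (P.disj _ _ h) (hπ p hp) hx
      exact mem_biUnion (by simpa using hpi) hp
    · exact (Finset.mem_filter.1 hp).2 ▸ hπ p
  simp only [sum, hE, ← measureReal_def]
  exact sum_measureReal_biUnion_smul hmeas hdisj (fun _ => Finset.mem_univ _) _

end TaggedPart

theorem TaggedPart.exists_isHenstock_isFine {T : Type*} [MetricSpace T] [CompactSpace T]
    [MeasurableSpace T] [OpensMeasurableSpace T] {γ : T → ℝ} (hγ : IsGage γ) :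
    ∃ P : TaggedPart T univ, P.IsHenstock ∧ P.IsFine γ := by
  classical
  obtain ⟨s, hs⟩ := isCompact_univ.elim_finite_subcover (fun t => Metric.ball t (γ t))
    (fun _ => Metric.isOpen_ball) fun x _ => mem_iUnion.2 ⟨x, Metric.mem_ball_self (hγ x)⟩
  let t : Fin s.card → T := fun i => s.equivFin.symm i
  have ht : ∀ i, t i ∈ s := fun i => (s.equivFin.symm i).2
  have ht_eq : ∀ x (hx : x ∈ s), t (s.equivFin ⟨x, hx⟩) = x := fun x hx => by simp [t]
  let U : Fin s.card → Set T := fun i => Metric.ball (t i) (γ (t i))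
  let D := disjointed U
  have hD : ∀ x, ∃ i, x ∈ D i := fun x => by
    obtain ⟨y, hy, hxy⟩ := mem_iUnion₂.1 (hs (mem_univ x))
    rw [← mem_iUnion, iUnion_disjointed]
    exact mem_iUnion.2 ⟨s.equivFin ⟨y, hy⟩, by simpa only [U, ht_eq] using hxy⟩
  refine ⟨⟨s.card, fun i => insert (t i) (D i \ s), t, fun i => ?_, fun i j hij => ?_, ?_⟩,
    fun i => mem_insert _ _, ?_⟩
  · exact ((disjointedRec (f := U) (fun _ _ h => h.diff measurableSet_ball)
      measurableSet_ball).diff s.measurableSet).insert _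
  · refine Set.disjoint_insert_left.2 ⟨?_, Set.disjoint_insert_right.2
      ⟨fun h => h.2 (ht j), (disjoint_disjointed U hij).mono sdiff_subset sdiff_subset⟩⟩
    rintro (h | h)
    · exact hij (Subtype.coe_injective.comp s.equivFin.symm.injective h)
    · exact h.2 (ht i)
  · refine eq_univ_of_forall fun x => mem_iUnion.2 ?_
    by_cases hx : x ∈ s
    · exact ⟨s.equivFin ⟨x, hx⟩, by rw [ht_eq]; exact mem_insert _ _⟩
    · obtain ⟨i, hi⟩ := hD x
      exact ⟨i, mem_insert_of_mem _ ⟨hi, hx⟩⟩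
  · rintro i w (rfl | hw)
    · simpa using hγ (t i)
    · exact disjointed_subset U i hw.1

namespace TaggedPart

variable {T : Type*} [MeasurableSpace T] {A : Set T} (P Q : TaggedPart T A)

/-- Splitting off the tag of `Q` ensures that no cell contains two distinct tags. -/
def refineCell (p : Fin P.k × Fin Q.k × Bool) : Set T :=
  P.E p.1 ∩ Q.E p.2.1 ∩
    if p.2.2 then {Q.tag p.2.1} \ {P.tag p.1} else ({Q.tag p.2.1} \ {P.tag p.1})ᶜ

theorem refineCell_subset (p : Fin P.k × Fin Q.k × Bool) :
    P.refineCell Q p ⊆ P.E p.1 ∩ Q.E p.2.1 :=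
  inter_subset_left

theorem measurableSet_refineCell [MeasurableSingletonClass T] (p : Fin P.k × Fin Q.k × Bool) :
    MeasurableSet (P.refineCell Q p) := by
  have hD := (measurableSet_singleton (Q.tag p.2.1)).diff (measurableSet_singleton (P.tag p.1))
  refine ((P.meas _).inter (Q.meas _)).inter ?_
  split_ifs
  exacts [hD, hD.compl]

theorem pairwise_disjoint_refineCell : Pairwise (Disjoint on P.refineCell Q) := by
  rintro ⟨i, j, b⟩ ⟨i', j', b'⟩ hne
  refine Set.disjoint_left.2 fun x hx hx' => ?_
  obtain rfl : i = i' := by_contra fun h => Set.disjoint_left.1 (P.disj _ _ h) hx.1.1 hx'.1.1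
  obtain rfl : j = j' := by_contra fun h => Set.disjoint_left.1 (Q.disj _ _ h) hx.1.2 hx'.1.2
  cases b <;> cases b' <;> simp_all [refineCell]

theorem iUnion_refineCell : ⋃ p, P.refineCell Q p = A := by
  refine Subset.antisymm (iUnion_subset fun p => (P.refineCell_subset Q p).trans <|
    inter_subset_left.trans ((subset_iUnion P.E p.1).trans P.cover.subset)) fun x hx => ?_
  obtain ⟨i, hi⟩ := mem_iUnion.1 (P.cover.symm.subset hx)
  obtain ⟨j, hj⟩ := mem_iUnion.1 (Q.cover.symm.subset hx)
  by_cases hD : x ∈ ({Q.tag j} \ {P.tag i} : Set T)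
  · exact mem_iUnion.2 ⟨(i, j, true), ⟨hi, hj⟩, hD⟩
  · exact mem_iUnion.2 ⟨(i, j, false), ⟨hi, hj⟩, hD⟩

theorem eq_of_tags_mem_refineCell {p : Fin P.k × Fin Q.k × Bool}
    (hP : P.tag p.1 ∈ P.refineCell Q p) (hQ : Q.tag p.2.1 ∈ P.refineCell Q p) :
    P.tag p.1 = Q.tag p.2.1 := by
  obtain ⟨i, j, _ | _⟩ := p <;> simp_all [refineCell, eq_comm]

theorem exists_left_tag_mem_refineCell (hP : P.IsHenstock) (p : Fin P.k × Fin Q.k × Bool) :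
    ∃ q, P.tag q.1 = P.tag p.1 ∧ P.tag p.1 ∈ P.refineCell Q q := by
  obtain ⟨q, hq⟩ := mem_iUnion.1 <|
    (P.iUnion_refineCell Q).symm.subset (P.cover.subset (mem_iUnion_of_mem _ (hP p.1)))
  exact ⟨q, by rw [hP.eq_of_tag_mem (P.refineCell_subset Q q hq).1], hq⟩

theorem exists_right_tag_mem_refineCell (hQ : Q.IsHenstock) (p : Fin P.k × Fin Q.k × Bool) :
    ∃ q, Q.tag q.2.1 = Q.tag p.2.1 ∧ Q.tag p.2.1 ∈ P.refineCell Q q := by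
  obtain ⟨q, hq⟩ := mem_iUnion.1 <|
    (P.iUnion_refineCell Q).symm.subset (Q.cover.subset (mem_iUnion_of_mem _ (hQ p.2.1)))
  exact ⟨q, by rw [hQ.eq_of_tag_mem (P.refineCell_subset Q q hq).2], hq⟩

variable [MeasurableSingletonClass T] {X : Type*} [AddCommMonoid X] [Module ℝ X]
  (μ : Measure T) [IsFiniteMeasure μ]

theorem sum_eq_sum_refineCell_left (g : T → X) :
    P.sum g μ = ∑ p, μ.real (P.refineCell Q p) • g (P.tag p.1) :=
  P.sum_eq_sum_of_refines (P.measurableSet_refineCell Q) (P.pairwise_disjoint_refineCell Q)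
    (P.iUnion_refineCell Q) (fun p => (P.refineCell_subset Q p).trans inter_subset_left) g μ

theorem sum_eq_sum_refineCell_right (g : T → X) :
    Q.sum g μ = ∑ p, μ.real (P.refineCell Q p) • g (Q.tag p.2.1) :=
  Q.sum_eq_sum_of_refines (P.measurableSet_refineCell Q) (P.pairwise_disjoint_refineCell Q)
    (P.iUnion_refineCell Q) (fun p => (P.refineCell_subset Q p).trans inter_subset_right) g μ

end TaggedPart

/-- Mixing the tags of `P` and `Q` cell by cell gives further `γ`-fine Henstock partitions, whose
Riemann sums of `f` are all within `b` of `J`. -/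
theorem TaggedPart.sum_abs_le_sum_abs_add {T : Type*} [MeasurableSpace T]
    [MeasurableSingletonClass T] [PseudoMetricSpace T] {A : Set T} {X : Type*}
    [NormedAddCommGroup X] [Lattice X] [IsOrderedAddMonoid X] [HasSolidNorm X] [NormedSpace ℝ X]
    {μ : Measure T} [IsFiniteMeasure μ] {f : T → X} {J b : X} {γ : T → ℝ}
    (hb : ∀ R : TaggedPart T A, R.IsHenstock → R.IsFine γ → |R.sum f μ - J| ≤ b)
    {P Q : TaggedPart T A} (hP : P.IsHenstock) (hPγ : P.IsFine γ) (hQ : Q.IsHenstock)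
    (hQγ : Q.IsFine γ) :
    P.sum (fun t => |f t|) μ ≤ Q.sum (fun t => |f t|) μ + 6 • b := by
  classical
  set B := P.refineCell Q
  have hmix : ∀ S : Finset (Fin P.k × Fin Q.k × Bool),
      (S ⊆ ({p | P.tag p.1 ∈ B p} : Finset _) ∨ ({p | P.tag p.1 ∈ B p} : Finset _) ⊆ S) →
      (S ⊆ ({p | P.tag p.1 ∈ B p ∨ Q.tag p.2.1 ∉ B p} : Finset _) ∨
        ({p | P.tag p.1 ∈ B p ∨ Q.tag p.2.1 ∉ B p} : Finset _) ⊆ S) →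
      |∑ p, (if p ∈ S then μ.real (B p) • f (P.tag p.1) else μ.real (B p) • f (Q.tag p.2.1))
        - J| ≤ b := by
    intro S h₁ h₂
    have hR := hb (merge B (mixTags S (fun p => P.tag p.1) fun p => Q.tag p.2.1)
      (P.measurableSet_refineCell Q) (P.pairwise_disjoint_refineCell Q) (P.iUnion_refineCell Q))
      (isHenstock_merge (exists_mixTags_eq_mem (P.exists_left_tag_mem_refineCell Q hP)
        (P.exists_right_tag_mem_refineCell Q hQ) (fun _ => P.eq_of_tags_mem_refineCell Q) h₁ h₂))
      (isFine_merge fun p w hw => by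
        unfold mixTags
        split_ifs
        exacts [hPγ _ w (P.refineCell_subset Q p hw).1, hQγ _ w (P.refineCell_subset Q p hw).2])
    simpa only [sum_merge, mixTags, apply_ite] using hR
  rw [← sub_le_iff_le_add', P.sum_eq_sum_refineCell_left Q, P.sum_eq_sum_refineCell_right Q,
    ← Finset.sum_sub_distrib]
  calc _ ≤ ∑ p, |μ.real (B p) • f (P.tag p.1) - μ.real (B p) • f (Q.tag p.2.1)| :=
        Finset.sum_le_sum fun p _ => by
          rw [← abs_smul_of_nonneg measureReal_nonneg, ← abs_smul_of_nonneg measureReal_nonneg]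
          exact (le_abs_self _).trans (abs_abs_sub_abs_le _ _)
    _ ≤ 6 • b := sum_abs_sub_le_of_forall_comparable _ _
        (Finset.monotone_filter_right _ fun _ _ => Or.inl) hmix

theorem exists_antitone_gage_le {T : Type*} (γ : ℕ → T → ℝ) (hγ : ∀ n, IsGage (γ n)) :
    ∃ δ : ℕ → T → ℝ, Antitone δ ∧ (∀ n, IsGage (δ n)) ∧ ∀ n, δ n ≤ γ n :=
  ⟨fun n t => (Finset.range (n + 1)).inf' Finset.nonempty_range_add_one (γ · t),
    fun _ _ hmn _ => Finset.inf'_mono _ (Finset.range_subset_range.2 (Nat.succ_le_succ hmn)) _,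
    fun _ t => (Finset.lt_inf'_iff _).2 fun k _ => hγ k t,
    fun n _ => Finset.inf'_le _ (Finset.self_mem_range_succ n)⟩

theorem hasOHIntegralOn_of_cauchy {T : Type*} [MeasurableSpace T] [PseudoMetricSpace T]
    {A : Set T} {X : Type*} [NormedAddCommGroup X] [Lattice X] [IsOrderedAddMonoid X]
    [NormedSpace ℝ X] {μ : Measure T} (hDC : ∀ s : Set X, s.Nonempty → BddAbove s → ∃ x, IsLUB s x)
    (hcousin : ∀ δ : T → ℝ, IsGage δ → ∃ P : TaggedPart T A, P.IsHenstock ∧ P.IsFine δ)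
    {g : T → X} {c : ℕ → X} (hc : IsOSeq c) {γ : ℕ → T → ℝ} (hγ : ∀ n, IsGage (γ n))
    (hcauchy : ∀ n (P Q : TaggedPart T A), P.IsHenstock → P.IsFine (γ n) → Q.IsHenstock →
      Q.IsFine (γ n) → P.sum g μ ≤ Q.sum g μ + c n) :
    ∃ J, HasOHIntegralOn g μ A J := by
  obtain ⟨δ, hδ, hδγ, hδle⟩ := exists_antitone_gage_le γ hγ
  let S n := (fun P : TaggedPart T A => P.sum g μ) '' {P | P.IsHenstock ∧ P.IsFine (δ n)}
  obtain ⟨J, hJ⟩ := exists_forall_abs_sub_le_of_antitone hDC (S := S)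
    (fun _ _ hmn => image_mono fun P hP => ⟨hP.1, hP.2.mono (hδ hmn)⟩)
    (fun n => (hcousin _ (hδγ n)).elim fun P hP => ⟨_, P, hP, rfl⟩)
    (by
      rintro n _ ⟨P, hP, rfl⟩ _ ⟨Q, hQ, rfl⟩
      exact hcauchy n P Q hP.1 (hP.2.mono (hδle n)) hQ.1 (hQ.2.mono (hδle n)))
  exact ⟨J, c, hc, δ, hδγ, fun n P hP hPδ => hJ n _ ⟨P, ⟨hP, hPδ⟩, rfl⟩⟩

theorem oH_integrable_abs_general {T : Type*} [MetricSpace T] [CompactSpace T] [MeasurableSpace T] [BorelSpace T]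
    (μ : Measure T) [IsFiniteMeasure μ]
    {X : Type*} [NormedAddCommGroup X] [Lattice X] [IsOrderedAddMonoid X] [HasSolidNorm X] [NormedSpace ℝ X]
    (hDC : ∀ s : Set X, s.Nonempty → BddAbove s → ∃ x, IsLUB s x) (f : T → X) (J : X)
    (hf : HasOHIntegralOn f μ Set.univ J) :
    ∃ J' : X, HasOHIntegralOn (fun t => |f t|) μ Set.univ J' := by
  obtain ⟨b, hb, γ, hγ, hfγ⟩ := hf
  exact hasOHIntegralOn_of_cauchy hDC (fun _ => TaggedPart.exists_isHenstock_isFine) (hb.nsmul 6)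
    hγ fun n _ _ hP hPγ hQ hQγ => TaggedPart.sum_abs_le_sum_abs_add (hfγ n) hP hPγ hQ hQγ

theorem oH_integrable_abs {T : Type*} [MetricSpace T] [CompactSpace T] [MeasurableSpace T] [BorelSpace T]
    (μ : Measure T) [IsFiniteMeasure μ] [μ.Regular]
    {X : Type*} [NormedAddCommGroup X] [Lattice X] [IsOrderedAddMonoid X] [HasSolidNorm X] [NormedSpace ℝ X] [CompleteSpace X]
    (hDC : ∀ s : Set X, s.Nonempty → BddAbove s → ∃ x, IsLUB s x) (f : T → X) (J : X)
    (hf : HasOHIntegralOn f μ Set.univ J) :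
    ∃ J' : X, HasOHIntegralOn (fun t => |f t|) μ Set.univ J' :=
  oH_integrable_abs_general μ hDC f J hf
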